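/- For complex $q$ with $|q|<1$, Fine's identity holds: $\sum_{n=0}^\infty \frac{q^{n^2}}{(-q;q)_n^2} = 1 - \sum_{n=1}^\infty \frac{(-1)^n q^n}{(-q;q)_n}$, both sides converging absolutely. -/

import Mathlib

open Filter Topology

/-- The q-Pochhammer symbol `(-q;q)_n = ∏_{j=1}^n (1 + q^j)`. -/
noncomputable def negPoch (q : ℂ) (n : ℕ) : ℂ := ∏ j ∈ Finset.range n, (1 + q ^ (j + 1))

/-!
Let `S_N = ∑_{m ≥ 0} (-q^{N+1})^m / (-q;q)_{N+m}`. Splitting off the first term, and splitting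
each term with `(-q;q)_{N+m+1} = (-q;q)_{N+m} (1 + q^{N+m+1})`, gives
`S_N (1 + q^{N+1}) = 1 / (-q;q)_N + q^{2N+2} S_{N+1}`. This makes `q^{N²} / (-q;q)_N²` telescope as
`V_N - V_{N+1}` with `V_N = q^{N²} (1 + q^N) / (-q;q)_N² - q^{N²+N} S_N / (-q;q)_N`. The products
`(-q;q)_N` are bounded away from `0`, so `V_N → 0`, and the series sums to
`V_0 = 2 - S_0 = 1 - ∑_{n ≥ 1} (-q)^n / (-q;q)_n`.
-/

open Finset

theorem tsum_eq_of_eq_sub_succ {G : Type*} [AddCommGroup G] [TopologicalSpace G]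
    [IsTopologicalAddGroup G] [T2Space G] {f V : ℕ → G} (hf : Summable f)
    (h : ∀ n, f n = V n - V (n + 1)) (hV : Tendsto V atTop (𝓝 0)) : ∑' n, f n = V 0 := by
  refine tendsto_nhds_unique hf.hasSum.tendsto_sum_nat ?_
  simp_rw [h, sum_range_sub']
  simpa using tendsto_const_nhds.sub hV

theorem one_add_ne_zero_of_norm_lt_one {R : Type*} [SeminormedAddGroup R] [One R]
    [NormOneClass R] {z : R}
    (hz : ‖z‖ < 1) : 1 + z ≠ 0 := by
  intro h
  rw [eq_neg_of_add_eq_zero_right h, norm_neg, norm_one] at hz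
  exact lt_irrefl _ hz

theorem inv_one_sub_le_one_add_div {a r : ℝ} (ha : 0 ≤ a) (har : a ≤ r) (hr : r < 1) :
    (1 - a)⁻¹ ≤ 1 + a / (1 - r) := by
  have h1a : 0 < 1 - a := by linarith
  have h1r : 0 < 1 - r := by linarith
  have key : a ≤ a / (1 - r) * (1 - a) := by
    rw [div_mul_eq_mul_div, le_div_iff₀ h1r]
    nlinarith
  rw [inv_le_iff_one_le_mul₀ h1a]
  nlinarith

theorem negPoch_succ (q : ℂ) (n : ℕ) : negPoch q (n + 1) = negPoch q n * (1 + q ^ (n + 1)) :=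
  prod_range_succ _ _

theorem negPoch_zero (q : ℂ) : negPoch q 0 = 1 := prod_range_zero _

section
variable {q : ℂ}

theorem norm_pow_succ_lt_one (hq : ‖q‖ < 1) (k : ℕ) : ‖q ^ (k + 1)‖ < 1 := by
  rw [norm_pow]
  exact pow_lt_one₀ (norm_nonneg q) hq k.succ_ne_zero

theorem one_add_pow_succ_ne_zero (hq : ‖q‖ < 1) (k : ℕ) : 1 + q ^ (k + 1) ≠ 0 :=
  one_add_ne_zero_of_norm_lt_one (norm_pow_succ_lt_one hq k)

theorem norm_pow_le_norm_pow (hq : ‖q‖ ≤ 1) {m n : ℕ} (h : m ≤ n) : ‖q ^ n‖ ≤ ‖q‖ ^ m := by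
  rw [norm_pow]
  exact pow_le_pow_of_le_one (norm_nonneg q) hq h

theorem negPoch_ne_zero (hq : ‖q‖ < 1) (n : ℕ) : negPoch q n ≠ 0 :=
  prod_ne_zero_iff.2 fun j _ ↦ one_add_pow_succ_ne_zero hq j

theorem norm_inv_negPoch_le (hq : ‖q‖ < 1) (n : ℕ) :
    ‖(negPoch q n)⁻¹‖ ≤ Real.exp (‖q‖ / (1 - ‖q‖) ^ 2) := by
  set r := ‖q‖
  have hr0 : 0 ≤ r := norm_nonneg q
  have hr1 : 0 < 1 - r := by linarith
  have hfactor (j : ℕ) : ‖(1 + q ^ (j + 1))⁻¹‖ ≤ 1 + r ^ j * (r / (1 - r)) := by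
    have hle : r ^ (j + 1) ≤ r := pow_le_of_le_one hr0 hq.le j.succ_ne_zero
    calc ‖(1 + q ^ (j + 1))⁻¹‖ = ‖1 + q ^ (j + 1)‖⁻¹ := norm_inv _
      _ ≤ (1 - r ^ (j + 1))⁻¹ := by
          refine inv_anti₀ (by linarith) ?_
          simpa [norm_pow] using norm_sub_le_norm_add (1 : ℂ) (q ^ (j + 1))
      _ ≤ 1 + r ^ (j + 1) / (1 - r) := inv_one_sub_le_one_add_div (by positivity) hle hq
      _ = 1 + r ^ j * (r / (1 - r)) := by rw [pow_succ, mul_div_assoc]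
  calc ‖(negPoch q n)⁻¹‖ = ∏ j ∈ range n, ‖(1 + q ^ (j + 1))⁻¹‖ := by
        rw [negPoch, ← prod_inv_distrib, norm_prod]
    _ ≤ ∏ j ∈ range n, (1 + r ^ j * (r / (1 - r))) :=
        prod_le_prod (fun _ _ ↦ norm_nonneg _) fun j _ ↦ hfactor j
    _ ≤ Real.exp (∑ j ∈ range n, r ^ j * (r / (1 - r))) :=
        Real.prod_one_add_le_exp_sum _ fun j ↦ by positivity
    _ ≤ Real.exp (r / (1 - r) ^ 2) := by
        gcongr
        rw [← sum_mul, range_eq_Ico]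
        calc (∑ j ∈ Ico 0 n, r ^ j) * (r / (1 - r)) ≤ r ^ 0 / (1 - r) * (r / (1 - r)) := by
              gcongr; exact geom_sum_Ico_le_of_lt_one hr0 hq
          _ = r / (1 - r) ^ 2 := by field_simp

theorem norm_pow_div_negPoch_le {C : ℝ} (hC : ∀ n, ‖(negPoch q n)⁻¹‖ ≤ C) (y : ℂ) (m n : ℕ) :
    ‖y ^ m / negPoch q n‖ ≤ C * ‖y‖ ^ m := by
  rw [div_eq_mul_inv, norm_mul, norm_pow, mul_comm]
  gcongr
  exact hC n

theorem summable_norm_pow_div_negPoch (hq : ‖q‖ < 1) {y : ℂ} (hy : ‖y‖ < 1) (N : ℕ) :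
    Summable fun m ↦ ‖y ^ m / negPoch q (N + m)‖ :=
  .of_nonneg_of_le (fun _ ↦ norm_nonneg _)
    (fun m ↦ norm_pow_div_negPoch_le (norm_inv_negPoch_le hq) y m _)
    ((summable_geometric_of_lt_one (norm_nonneg y) hy).mul_left _)

noncomputable def negPochSeries (q y : ℂ) (N : ℕ) : ℂ := ∑' m, y ^ m / negPoch q (N + m)

theorem norm_negPochSeries_le {C : ℝ} (hC : ∀ n, ‖(negPoch q n)⁻¹‖ ≤ C) {y : ℂ} (hy : ‖y‖ < 1)
    (N : ℕ) : ‖negPochSeries q y N‖ ≤ C * (1 - ‖y‖)⁻¹ :=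
  tsum_of_norm_bounded ((hasSum_geometric_of_lt_one (norm_nonneg y) hy).mul_left C)
    fun m ↦ norm_pow_div_negPoch_le hC y m _

theorem negPochSeries_eq_inv_add (hq : ‖q‖ < 1) {y : ℂ} (hy : ‖y‖ < 1) (N : ℕ) :
    negPochSeries q y N = (negPoch q N)⁻¹ + y * negPochSeries q y (N + 1) := by
  rw [negPochSeries, (summable_norm_pow_div_negPoch hq hy N).of_norm.tsum_eq_zero_add,
    negPochSeries, ← tsum_mul_left]
  congr 1
  · simp
  · refine tsum_congr fun m ↦ ?_
    rw [pow_succ', mul_div_assoc, Nat.add_right_comm, ← add_assoc]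

theorem negPochSeries_eq_add (hq : ‖q‖ < 1) {y : ℂ} (hy : ‖y‖ < 1) (N : ℕ) :
    negPochSeries q y N
      = negPochSeries q y (N + 1) + q ^ (N + 1) * negPochSeries q (y * q) (N + 1) := by
  have hyq : ‖y * q‖ < 1 := by
    rw [norm_mul]; exact mul_lt_one_of_nonneg_of_lt_one_left (norm_nonneg y) hy hq.le
  rw [negPochSeries, negPochSeries, negPochSeries, ← tsum_mul_left,
    ← (summable_norm_pow_div_negPoch hq hy _).of_norm.tsum_add
      ((summable_norm_pow_div_negPoch hq hyq _).of_norm.mul_left _)]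
  refine tsum_congr fun m ↦ ?_
  have hP := negPoch_ne_zero hq (N + m)
  have hfac := one_add_pow_succ_ne_zero hq (N + m)
  rw [Nat.add_right_comm, negPoch_succ]
  field_simp
  ring

theorem negPochSeries_mul_one_add (hq : ‖q‖ < 1) (N : ℕ) :
    negPochSeries q (-q ^ (N + 1)) N * (1 + q ^ (N + 1))
      = (negPoch q N)⁻¹ + (q ^ (N + 1)) ^ 2 * negPochSeries q (-q ^ (N + 1 + 1)) (N + 1) := by
  have hx : ‖-q ^ (N + 1)‖ < 1 := by
    rw [norm_neg]
    exact norm_pow_succ_lt_one hq N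
  have h₁ := negPochSeries_eq_inv_add hq hx N
  have h₂ := negPochSeries_eq_add hq hx N
  rw [neg_mul, ← pow_succ] at h₂
  linear_combination h₁ + q ^ (N + 1) * h₂

theorem negPochSeries_neg_self_zero (hq : ‖q‖ < 1) :
    negPochSeries q (-q) 0
      = 1 + ∑' n : ℕ, (-1 : ℂ) ^ (n + 1) * q ^ (n + 1) / negPoch q (n + 1) := by
  rw [negPochSeries,
    (summable_norm_pow_div_negPoch hq (by rwa [norm_neg]) 0).of_norm.tsum_eq_zero_add]
  simp only [pow_zero, zero_add, negPoch_zero, div_one, neg_pow q, mul_one]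

noncomputable def fineTail (q : ℂ) (N : ℕ) : ℂ :=
  q ^ (N ^ 2) * (1 + q ^ N) / negPoch q N ^ 2
    - q ^ (N ^ 2 + N) * negPochSeries q (-q ^ (N + 1)) N / negPoch q N

theorem pow_sq_div_negPoch_sq_eq_fineTail_sub (hq : ‖q‖ < 1) (N : ℕ) :
    q ^ (N ^ 2) / negPoch q N ^ 2 = fineTail q N - fineTail q (N + 1) := by
  have hFE := negPochSeries_mul_one_add hq N
  have hP := negPoch_ne_zero hq N
  have hfac := one_add_pow_succ_ne_zero hq N
  rw [fineTail, fineTail, negPoch_succ, show (N + 1) ^ 2 = N ^ 2 + N + N + 1 by ring]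
  simp only [pow_add, pow_one] at hFE hfac ⊢
  field_simp at hFE ⊢
  linear_combination (q ^ (N ^ 2) * q ^ N) * hFE

theorem norm_fineTail_le (hq : ‖q‖ < 1) {C : ℝ} (hC : ∀ n, ‖(negPoch q n)⁻¹‖ ≤ C) (N : ℕ) :
    ‖fineTail q N‖ ≤ C ^ 2 * (2 + (1 - ‖q‖)⁻¹) * ‖q‖ ^ N := by
  have hC0 : 0 ≤ C := (norm_nonneg _).trans (hC 0)
  have hS : ‖negPochSeries q (-q ^ (N + 1)) N‖ ≤ C * (1 - ‖q‖)⁻¹ := by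
    have hle : ‖-q ^ (N + 1)‖ ≤ ‖q‖ := by
      rw [norm_neg, norm_pow]
      exact pow_le_of_le_one (norm_nonneg q) hq.le N.succ_ne_zero
    refine (norm_negPochSeries_le hC (hle.trans_lt hq) N).trans ?_
    gcongr
  have h2 : ‖1 + q ^ N‖ ≤ 2 := by
    refine (norm_add_le _ _).trans ?_
    rw [norm_one, norm_pow]
    linarith [pow_le_one₀ (n := N) (norm_nonneg q) hq.le]
  calc ‖fineTail q N‖
      ≤ ‖q ^ (N ^ 2)‖ * ‖1 + q ^ N‖ * ‖(negPoch q N)⁻¹‖ ^ 2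
        + ‖q ^ (N ^ 2 + N)‖ * ‖negPochSeries q (-q ^ (N + 1)) N‖ * ‖(negPoch q N)⁻¹‖ := by
        rw [fineTail, div_eq_mul_inv, div_eq_mul_inv, ← norm_pow, ← norm_mul, ← norm_mul,
          ← norm_mul, ← norm_mul, inv_pow]
        exact norm_sub_le _ _
    _ ≤ ‖q‖ ^ N * 2 * C ^ 2 + ‖q‖ ^ N * (C * (1 - ‖q‖)⁻¹) * C := by
        gcongr
        · exact norm_pow_le_norm_pow hq.le (Nat.le_self_pow two_ne_zero N)
        · exact hC N
        · exact norm_pow_le_norm_pow hq.le (Nat.le_add_left N _)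
        · exact hC N
    _ = C ^ 2 * (2 + (1 - ‖q‖)⁻¹) * ‖q‖ ^ N := by ring

theorem tendsto_fineTail (hq : ‖q‖ < 1) : Tendsto (fineTail q) atTop (𝓝 0) :=
  squeeze_zero_norm (norm_fineTail_le hq (norm_inv_negPoch_le hq))
    (by simpa using (tendsto_pow_atTop_nhds_zero_of_lt_one (norm_nonneg q) hq).const_mul _)

theorem fineTail_zero (q : ℂ) : fineTail q 0 = 2 - negPochSeries q (-q) 0 := by
  norm_num [fineTail, negPoch_zero]

theorem summable_norm_neg_pow_div_negPoch (hq : ‖q‖ < 1) :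
    Summable fun n : ℕ ↦ ‖(-1 : ℂ) ^ (n + 1) * q ^ (n + 1) / negPoch q (n + 1)‖ := by
  simpa only [zero_add, neg_pow q] using
    (summable_nat_add_iff 1).2 (summable_norm_pow_div_negPoch hq (y := -q) (by rwa [norm_neg]) 0)

theorem summable_norm_pow_sq_div_negPoch_sq (hq : ‖q‖ < 1) :
    Summable fun n : ℕ ↦ ‖q ^ (n ^ 2) / negPoch q n ^ 2‖ := by
  refine .of_nonneg_of_le (fun _ ↦ norm_nonneg _) (fun n ↦ ?_)
    ((summable_geometric_of_lt_one (norm_nonneg q) hq).mul_left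
      (Real.exp (‖q‖ / (1 - ‖q‖) ^ 2) ^ 2))
  rw [div_eq_mul_inv, norm_mul, ← inv_pow, norm_pow (negPoch q n)⁻¹, mul_comm]
  gcongr ?_ ^ 2 * ?_
  · exact norm_inv_negPoch_le hq n
  · exact norm_pow_le_norm_pow hq.le (Nat.le_self_pow two_ne_zero n)

end

theorem fine_identity (q : ℂ) (hq : ‖q‖ < 1) :
    Summable (fun n : ℕ => ‖q ^ (n ^ 2) / (negPoch q n) ^ 2‖) ∧
    Summable (fun n : ℕ => ‖(-1 : ℂ) ^ (n + 1) * q ^ (n + 1) / negPoch q (n + 1)‖) ∧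
    (∑' n : ℕ, q ^ (n ^ 2) / (negPoch q n) ^ 2)
      = 1 - ∑' n : ℕ, (-1 : ℂ) ^ (n + 1) * q ^ (n + 1) / negPoch q (n + 1) := by
  have hL := summable_norm_pow_sq_div_negPoch_sq hq
  refine ⟨hL, summable_norm_neg_pow_div_negPoch hq, ?_⟩
  rw [tsum_eq_of_eq_sub_succ hL.of_norm (pow_sq_div_negPoch_sq_eq_fineTail_sub hq)
    (tendsto_fineTail hq), fineTail_zero, negPochSeries_neg_self_zero hq]
  ring
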